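/- arXiv:2503.21626 — 5 statements merged into one kernel-verified Lean document; each statement's English description precedes it below -/
import Mathlib

section
/- Let f : ℝ → ℝ be twice continuously differentiable and let u = u(x,t) be a twice continuously differentiable solution of u_t + f(u)_x = 0 on a neighborhood of the point (0, t₀) with t₀ > 0, satisfying u(0,t) = g(t) for all t near t₀, where g is twice differentiable. If f'(g(t₀)) ≠ 0, then the second spatial derivative at the boundary satisfies u_xx(0, t₀) = ( f'(g(t₀)) g''(t₀) − 2 f''(g(t₀)) g'(t₀)² ) / f'(g(t₀))³. -/
/-!
In quasilinear form the equation reads `u_t + f'(u) u_x = 0`; differentiating this identity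
in `x` and in `t` at `(0, t₀)` gives two linear relations between the second derivatives.
On the boundary `u_t = g'` and `u_tt = g''`, the equation itself gives `u_x = -g'/f'(g)`, and
the mixed derivatives agree by symmetry of the second derivative, so the two relations can be
solved for `u_xx` once `f'(g(t₀)) ≠ 0`.
-/

open Filter Topology

section Slices

variable {F : Type*} [NormedAddCommGroup F] [NormedSpace ℝ F] {w : ℝ × ℝ → F} {x t : ℝ}

theorem HasFDerivAt.hasDerivAt_fst_slice {L : ℝ × ℝ →L[ℝ] F} (h : HasFDerivAt w L (x, t)) :
    HasDerivAt (fun y => w (y, t)) (L (1, 0)) x :=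
  h.comp_hasDerivAt x ((hasDerivAt_id x).prodMk (hasDerivAt_const x t))

theorem HasFDerivAt.hasDerivAt_snd_slice {L : ℝ × ℝ →L[ℝ] F} (h : HasFDerivAt w L (x, t)) :
    HasDerivAt (fun s => w (x, s)) (L (0, 1)) t :=
  h.comp_hasDerivAt t ((hasDerivAt_const t x).prodMk (hasDerivAt_id t))

theorem DifferentiableAt.deriv_fst_slice (h : DifferentiableAt ℝ w (x, t)) :
    deriv (fun y => w (y, t)) x = fderiv ℝ w (x, t) (1, 0) :=
  h.hasFDerivAt.hasDerivAt_fst_slice.deriv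

theorem DifferentiableAt.deriv_snd_slice (h : DifferentiableAt ℝ w (x, t)) :
    deriv (fun s => w (x, s)) t = fderiv ℝ w (x, t) (0, 1) :=
  h.hasFDerivAt.hasDerivAt_snd_slice.deriv

theorem HasFDerivAt.fderiv_apply {S : ℝ × ℝ →L[ℝ] ℝ × ℝ →L[ℝ] F} {p : ℝ × ℝ}
    (hS : HasFDerivAt (fderiv ℝ w) S p) (v : ℝ × ℝ) :
    HasFDerivAt (fun q => fderiv ℝ w q v) ((ContinuousLinearMap.apply ℝ F v).comp S) p :=
  (ContinuousLinearMap.apply ℝ F v).hasFDerivAt.comp p hS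

theorem deriv_deriv_fst_slice {S : ℝ × ℝ →L[ℝ] ℝ × ℝ →L[ℝ] F}
    (hw : ∀ᶠ q in 𝓝 (x, t), DifferentiableAt ℝ w q) (hS : HasFDerivAt (fderiv ℝ w) S (x, t)) :
    deriv (fun y => deriv (fun z => w (z, t)) y) x = S (1, 0) (1, 0) := by
  have hw' : ∀ᶠ y in 𝓝 x, DifferentiableAt ℝ w (y, t) :=
    (continuous_id.prodMk continuous_const).continuousAt.eventually hw
  have hslice : (fun y => deriv (fun z => w (z, t)) y) =ᶠ[𝓝 x]
      fun y => fderiv ℝ w (y, t) (1, 0) := by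
    filter_upwards [hw'] with y hy using hy.deriv_fst_slice
  rw [hslice.deriv_eq]
  exact (hS.fderiv_apply (1, 0)).hasDerivAt_fst_slice.deriv

theorem fderiv_apply_snd_eventuallyEq_deriv {g : ℝ → F}
    (hw : ∀ᶠ q in 𝓝 (x, t), DifferentiableAt ℝ w q) (hg : ∀ᶠ s in 𝓝 t, w (x, s) = g s) :
    (fun s => fderiv ℝ w (x, s) (0, 1)) =ᶠ[𝓝 t] deriv g := by
  have hw' : ∀ᶠ s in 𝓝 t, DifferentiableAt ℝ w (x, s) :=
    (continuous_const.prodMk continuous_id).continuousAt.eventually hw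
  filter_upwards [hw', hg.eventually_nhds] with s hs (hgs : (fun r => w (x, r)) =ᶠ[𝓝 s] g)
  rw [← hs.deriv_snd_slice]
  exact hgs.deriv_eq

end Slices

section Quasilinear

variable {f : ℝ → ℝ} {w : ℝ × ℝ → ℝ}

noncomputable def quasilinearResidual (f : ℝ → ℝ) (w : ℝ × ℝ → ℝ) (p : ℝ × ℝ) : ℝ :=
  fderiv ℝ w p (0, 1) + deriv f (w p) * fderiv ℝ w p (1, 0)

theorem deriv_slice_add_deriv_flux_eq_quasilinearResidual {x t : ℝ}
    (hf : DifferentiableAt ℝ f (w (x, t))) (hw : DifferentiableAt ℝ w (x, t)) :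
    deriv (fun s => w (x, s)) t + deriv (fun y => f (w (y, t))) x =
      quasilinearResidual f w (x, t) := by
  have hflux : HasDerivAt (fun y => f (w (y, t)))
      (deriv f (w (x, t)) * fderiv ℝ w (x, t) (1, 0)) x :=
    hf.hasDerivAt.comp x hw.hasFDerivAt.hasDerivAt_fst_slice
  rw [hw.deriv_snd_slice, hflux.deriv]
  rfl

theorem second_derivative_relation_of_quasilinearResidual_eq_zero {p : ℝ × ℝ}
    {S : ℝ × ℝ →L[ℝ] ℝ × ℝ →L[ℝ] ℝ} (hf : DifferentiableAt ℝ (deriv f) (w p))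
    (hw : DifferentiableAt ℝ w p) (hS : HasFDerivAt (fderiv ℝ w) S p)
    (hres : quasilinearResidual f w =ᶠ[𝓝 p] 0) (e : ℝ × ℝ) :
    S e (0, 1) + deriv (deriv f) (w p) * fderiv ℝ w p e * fderiv ℝ w p (1, 0)
      + deriv f (w p) * S e (1, 0) = 0 := by
  have hderiv := (hS.fderiv_apply (0, 1)).add
    ((hf.hasDerivAt.comp_hasFDerivAt p hw.hasFDerivAt).mul (hS.fderiv_apply (1, 0)))
  have hzero : HasFDerivAt (quasilinearResidual f w) 0 p :=
    (hasFDerivAt_const (𝕜 := ℝ) 0 p).congr_of_eventuallyEq hres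
  have := congrArg (· e) (hderiv.unique hzero)
  simp only [Function.comp_apply, add_apply, ContinuousLinearMap.comp_apply,
    ContinuousLinearMap.apply_apply, smul_apply, smul_eq_mul, zero_apply] at this
  linear_combination this

end Quasilinear

theorem eq_div_cube_of_relations {a b c d A M X : ℝ} (ha : a ≠ 0) (h₁ : c + a * A = 0)
    (h₂ : d + b * c * A + a * M = 0) (h₃ : M + b * A * A + a * X = 0) :
    X = (a * d - 2 * b * c ^ 2) / a ^ 3 := by
  rw [eq_div_iff (pow_ne_zero 3 ha)]
  linear_combination a ^ 2 * h₃ - a * h₂ + b * (2 * c - a * A) * h₁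

theorem stmt2_general (f : ℝ → ℝ) (hf : ContDiff ℝ 2 f)
    (u : ℝ → ℝ → ℝ) (g : ℝ → ℝ) (t₀ : ℝ)
    (V : Set (ℝ × ℝ)) (hV : IsOpen V) (hmem : ((0 : ℝ), t₀) ∈ V)
    (hu : ContDiffOn ℝ 2 (fun p : ℝ × ℝ => u p.1 p.2) V)
    (hpde : ∀ x t : ℝ, (x, t) ∈ V →
      deriv (fun s => u x s) t + deriv (fun y => f (u y t)) x = 0)
    (hbc : ∀ᶠ t in nhds t₀, u 0 t = g t)
    (hg' : DifferentiableAt ℝ (deriv g) t₀)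
    (hne : deriv f (g t₀) ≠ 0) :
    deriv (fun x => deriv (fun y => u y t₀) x) 0 =
      (deriv f (g t₀) * deriv (deriv g) t₀
        - 2 * deriv (deriv f) (g t₀) * (deriv g t₀) ^ 2) / (deriv f (g t₀)) ^ 3 := by
  set w : ℝ × ℝ → ℝ := fun p => u p.1 p.2
  have hVnhds : V ∈ 𝓝 ((0 : ℝ), t₀) := hV.mem_nhds hmem
  have hwd : ∀ᶠ q in 𝓝 ((0 : ℝ), t₀), DifferentiableAt ℝ w q :=
    eventually_of_mem hVnhds fun q hq =>
      (hu.contDiffAt (hV.mem_nhds hq)).differentiableAt (by norm_num)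
  obtain ⟨S, hS⟩ : ∃ S, HasFDerivAt (fderiv ℝ w) S ((0 : ℝ), t₀) :=
    ⟨_, (((hu.fderiv_of_isOpen hV (by norm_num)).contDiffAt hVnhds).differentiableAt
      one_ne_zero).hasFDerivAt⟩
  have hSsymm : S (1, 0) (0, 1) = S (0, 1) (1, 0) :=
    second_derivative_symmetric_of_eventually (hwd.mono fun q hq => hq.hasFDerivAt) hS _ _
  have hres : quasilinearResidual f w =ᶠ[𝓝 ((0 : ℝ), t₀)] 0 := by
    filter_upwards [hVnhds, hwd] with q hq hqd
    rw [Pi.zero_apply, ← deriv_slice_add_deriv_flux_eq_quasilinearResidual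
      ((hf.differentiable (by norm_num)) _) hqd]
    exact hpde q.1 q.2 hq
  have hrel := second_derivative_relation_of_quasilinearResidual_eq_zero
    (hf.differentiable_deriv_two _) hwd.self_of_nhds hS hres
  have hwt := fderiv_apply_snd_eventuallyEq_deriv hwd hbc
  have hgt : fderiv ℝ w (0, t₀) (0, 1) = deriv g t₀ := hwt.self_of_nhds
  have hgtt : S (0, 1) (0, 1) = deriv (deriv g) t₀ :=
    (hS.fderiv_apply (0, 1)).hasDerivAt_snd_slice.unique
      (hg'.hasDerivAt.congr_of_eventuallyEq hwt)
  have hg0 : w (0, t₀) = g t₀ := hbc.self_of_nhds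
  have heq := hres.self_of_nhds
  have hx := hrel (1, 0)
  have ht := hrel (0, 1)
  rw [quasilinearResidual, Pi.zero_apply, hg0, hgt] at heq
  rw [hg0] at hx ht
  rw [hgt, hgtt, ← hSsymm] at ht
  rw [deriv_deriv_fst_slice hwd hS]
  exact eq_div_cube_of_relations hne heq ht hx

/-- Second order inverse Lax-Wendroff identity: for a `C²` solution of
`u_t + f(u)_x = 0` near the boundary point `(0, t₀)` with boundary data
`u(0,t) = g(t)`, if `f'(g(t₀)) ≠ 0` then
`u_xx(0,t₀) = (f'(g(t₀)) g''(t₀) − 2 f''(g(t₀)) g'(t₀)²) / f'(g(t₀))³`. -/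
theorem stmt2 (f : ℝ → ℝ) (hf : ContDiff ℝ 2 f)
    (u : ℝ → ℝ → ℝ) (g : ℝ → ℝ) (t₀ : ℝ) (ht₀ : 0 < t₀)
    (V : Set (ℝ × ℝ)) (hV : IsOpen V) (hmem : ((0 : ℝ), t₀) ∈ V)
    (hu : ContDiffOn ℝ 2 (fun p : ℝ × ℝ => u p.1 p.2) V)
    (hpde : ∀ x t : ℝ, (x, t) ∈ V →
      deriv (fun s => u x s) t + deriv (fun y => f (u y t)) x = 0)
    (hbc : ∀ᶠ t in nhds t₀, u 0 t = g t)
    (hg : ∀ᶠ t in nhds t₀, DifferentiableAt ℝ g t)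
    (hg' : DifferentiableAt ℝ (deriv g) t₀)
    (hne : deriv f (g t₀) ≠ 0) :
    deriv (fun x => deriv (fun y => u y t₀) x) 0 =
      (deriv f (g t₀) * deriv (deriv g) t₀
        - 2 * deriv (deriv f) (g t₀) * (deriv g t₀) ^ 2) / (deriv f (g t₀)) ^ 3 :=
  stmt2_general f hf u g t₀ V hV hmem hu hpde hbc hg' hne
end

section
/- Fix Δx > 0 and a grid point x_i, with neighboring nodes x_{i+l} = x_i + lΔx and cells I_{i+l} = [x_{i+l} − Δx/2, x_{i+l} + Δx/2]. Given real numbers f₋₁, f₀, f₁, h₋₁, h₁, there exists a unique real polynomial p₀ of degree at most 4 satisfying (1/Δx)∫_{I_{i+l}} p₀(x) dx = f_l for l = −1, 0, 1 and (1/Δx)∫_{I_{i+l}} p₀'(x) dx = h_l for l = −1, 1. Moreover, its value and derivative at the half point x_{i+1/2} = x_i + Δx/2 are p₀(x_{i+1/2}) = −(23/120)f₋₁ + (19/30)f₀ + (67/120)f₁ − (3Δx/40)h₋₁ − (7Δx/40)h₁ and p₀'(x_{i+1/2}) = (1/Δx)( (3/8)f₋₁ − 2f₀ + (13/8)f₁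 ) + (1/8)h₋₁ − (3/8)h₁. -/
open intervalIntegral

section hwenoAux

open Polynomial

lemma hweno_hasDeriv (c0 c1 c2 c3 c4 x : ℝ) :
    HasDerivAt (fun t : ℝ => c0*t + c1*t^2/2 + c2*t^3/3 + c3*t^4/4 + c4*t^5/5)
      (c0 + c1*x + c2*x^2 + c3*x^3 + c4*x^4) x := by
  have h : HasDerivAt (fun t : ℝ => c0*t + c1*t^2/2 + c2*t^3/3 + c3*t^4/4 + c4*t^5/5)
      (c0*1 + c1*((2:ℕ)*x^(2-1))/2 + c2*((3:ℕ)*x^(3-1))/3 + c3*((4:ℕ)*x^(4-1))/4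
        + c4*((5:ℕ)*x^(5-1))/5) x :=
    (((((hasDerivAt_id' (x := x)).const_mul c0).add
      (((hasDerivAt_pow 2 x).const_mul c1).div_const 2)).add
      (((hasDerivAt_pow 3 x).const_mul c2).div_const 3)).add
      (((hasDerivAt_pow 4 x).const_mul c3).div_const 4)).add
      (((hasDerivAt_pow 5 x).const_mul c4).div_const 5)
  convert h using 1
  push_cast
  ring

lemma hweno_integ (c0 c1 c2 c3 c4 a b : ℝ) :
    ∫ t in a..b, (c0 + c1*t + c2*t^2 + c3*t^3 + c4*t^4) =
      (c0*b + c1*b^2/2 + c2*b^3/3 + c3*b^4/4 + c4*b^5/5)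
        - (c0*a + c1*a^2/2 + c2*a^3/3 + c3*a^4/4 + c4*a^5/5) :=
  integral_eq_sub_of_hasDerivAt (fun x _ => hweno_hasDeriv c0 c1 c2 c3 c4 x)
    ((by fun_prop : Continuous fun t : ℝ => c0 + c1*t + c2*t^2 + c3*t^3 + c4*t^4).intervalIntegrable a b)

lemma hweno_eval_exp (q : ℝ[X]) (hq : q.natDegree ≤ 4) (t : ℝ) :
    q.eval t = q.coeff 0 + q.coeff 1*t + q.coeff 2*t^2 + q.coeff 3*t^3 + q.coeff 4*t^4 := by
  rw [Polynomial.eval_eq_sum_range' (Nat.lt_succ_of_le hq)]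
  simp [Finset.sum_range_succ]

lemma hweno_int_exp (q : ℝ[X]) (hq : q.natDegree ≤ 4) (a b : ℝ) :
    ∫ t in a..b, q.eval t =
      (q.coeff 0*b + q.coeff 1*b^2/2 + q.coeff 2*b^3/3 + q.coeff 3*b^4/4 + q.coeff 4*b^5/5)
        - (q.coeff 0*a + q.coeff 1*a^2/2 + q.coeff 2*a^3/3 + q.coeff 3*a^4/4 + q.coeff 4*a^5/5) := by
  simp_rw [hweno_eval_exp q hq]
  exact hweno_integ _ _ _ _ _ a b

lemma hweno_ftc (p : ℝ[X]) (a b : ℝ) :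
    ∫ t in a..b, p.derivative.eval t = p.eval b - p.eval a :=
  integral_eq_sub_of_hasDerivAt (fun x _ => p.hasDerivAt x)
    (p.derivative.continuous.intervalIntegrable a b)

lemma hweno_int_shift (p : ℝ[X]) (hp : p.natDegree ≤ 4) (xi a b : ℝ) :
    ∫ t in a..b, p.eval t =
      ((taylor xi p).coeff 0*(b - xi) + (taylor xi p).coeff 1*(b - xi)^2/2
        + (taylor xi p).coeff 2*(b - xi)^3/3 + (taylor xi p).coeff 3*(b - xi)^4/4
        + (taylor xi p).coeff 4*(b - xi)^5/5)
      - ((taylor xi p).coeff 0*(a - xi) + (taylor xi p).coeff 1*(a - xi)^2/2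
        + (taylor xi p).coeff 2*(a - xi)^3/3 + (taylor xi p).coeff 3*(a - xi)^4/4
        + (taylor xi p).coeff 4*(a - xi)^5/5) := by
  have hr : (taylor xi p).natDegree ≤ 4 := by rw [natDegree_taylor]; exact hp
  simp only [show ∀ t : ℝ, p.eval t = (taylor xi p).eval (t - xi) from
    fun t => (taylor_eval_sub xi p t).symm]
  rw [intervalIntegral.integral_comp_sub_right (fun u => (taylor xi p).eval u) xi]
  exact hweno_int_exp _ hr _ _

lemma hweno_deriv_taylor (xi : ℝ) (p : ℝ[X]) :
    taylor xi p.derivative = (taylor xi p).derivative := by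
  rw [taylor_apply, taylor_apply, Polynomial.derivative_comp]
  simp

lemma hweno_clear {s X y : ℝ} (hs : s ≠ 0) (h : (1/s) * X = y) : X = s * y := by
  field_simp at h
  linarith

lemma hweno_eval_shift (p : ℝ[X]) (hp : p.natDegree ≤ 4) (xi y : ℝ) :
    p.eval y = (taylor xi p).coeff 0 + (taylor xi p).coeff 1*(y - xi)
      + (taylor xi p).coeff 2*(y - xi)^2 + (taylor xi p).coeff 3*(y - xi)^3
      + (taylor xi p).coeff 4*(y - xi)^4 := by
  have hr : (taylor xi p).natDegree ≤ 4 := by rw [natDegree_taylor]; exact hp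
  rw [← taylor_eval_sub xi p y, hweno_eval_exp _ hr]

lemma hweno_deriv_eval_shift (p : ℝ[X]) (hp : p.natDegree ≤ 4) (xi y : ℝ) :
    p.derivative.eval y = (taylor xi p).coeff 1 + 2*(taylor xi p).coeff 2*(y - xi)
      + 3*(taylor xi p).coeff 3*(y - xi)^2 + 4*(taylor xi p).coeff 4*(y - xi)^3 := by
  have hr : (taylor xi p).natDegree ≤ 4 := by rw [natDegree_taylor]; exact hp
  have hd : (taylor xi p).derivative.natDegree ≤ 4 :=
    le_trans (natDegree_derivative_le _) (by omega)
  rw [← taylor_eval_sub xi p.derivative y, hweno_deriv_taylor, hweno_eval_exp _ hd]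
  have h5 : (taylor xi p).coeff 5 = 0 :=
    coeff_eq_zero_of_natDegree_lt (lt_of_le_of_lt hr (by norm_num))
  simp [Polynomial.coeff_derivative, h5]
  ring

lemma hweno_r (a0 a1 a2 a3 a4 : ℝ) :
    ∃ r : ℝ[X], r.natDegree ≤ 4 ∧ r.coeff 0 = a0 ∧ r.coeff 1 = a1 ∧ r.coeff 2 = a2 ∧
      r.coeff 3 = a3 ∧ r.coeff 4 = a4 := by
  refine ⟨C a0 + C a1*X + C a2*X^2 + C a3*X^3 + C a4*X^4, ?_, ?_, ?_, ?_, ?_, ?_⟩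
  · compute_degree
  all_goals simp [coeff_add, coeff_C, coeff_X, coeff_X_pow]

end hwenoAux

/-- The cell average conditions defining the big stencil HWENO polynomial `p₀`. -/
def HWENOBigStencilConds (Δx xi fm f0 f1 hm h1 : ℝ) (p : Polynomial ℝ) : Prop :=
  (1 / Δx) * ∫ t in (xi - Δx - Δx / 2)..(xi - Δx + Δx / 2), p.eval t = fm ∧
  (1 / Δx) * ∫ t in (xi - Δx / 2)..(xi + Δx / 2), p.eval t = f0 ∧
  (1 / Δx) * ∫ t in (xi + Δx - Δx / 2)..(xi + Δx + Δx / 2), p.eval t = f1 ∧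
  (1 / Δx) * ∫ t in (xi - Δx - Δx / 2)..(xi - Δx + Δx / 2), p.derivative.eval t = hm ∧
  (1 / Δx) * ∫ t in (xi + Δx - Δx / 2)..(xi + Δx + Δx / 2), p.derivative.eval t = h1

section hwenoKey

open Polynomial

lemma hweno_key (Δx : ℝ) (hs : Δx ≠ 0) (xi fm f0 f1 hm h1 : ℝ) (p : ℝ[X])
    (hdeg : p.natDegree ≤ 4) (hc : HWENOBigStencilConds Δx xi fm f0 f1 hm h1 p) :
    ((taylor xi p).coeff 0 - (taylor xi p).coeff 1*Δx + (13/12)*(taylor xi p).coeff 2*Δx^2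
        - (5/4)*(taylor xi p).coeff 3*Δx^3 + (121/80)*(taylor xi p).coeff 4*Δx^4 = fm) ∧
    ((taylor xi p).coeff 0 + (taylor xi p).coeff 2*Δx^2/12 + (taylor xi p).coeff 4*Δx^4/80 = f0) ∧
    ((taylor xi p).coeff 0 + (taylor xi p).coeff 1*Δx + (13/12)*(taylor xi p).coeff 2*Δx^2
        + (5/4)*(taylor xi p).coeff 3*Δx^3 + (121/80)*(taylor xi p).coeff 4*Δx^4 = f1) ∧
    ((taylor xi p).coeff 1 - 2*(taylor xi p).coeff 2*Δx + (13/4)*(taylor xi p).coeff 3*Δx^2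
        - 5*(taylor xi p).coeff 4*Δx^3 = hm) ∧
    ((taylor xi p).coeff 1 + 2*(taylor xi p).coeff 2*Δx + (13/4)*(taylor xi p).coeff 3*Δx^2
        + 5*(taylor xi p).coeff 4*Δx^3 = h1) := by
  obtain ⟨h1', h2', h3', h4', h5'⟩ := hc
  rw [hweno_int_shift p hdeg xi] at h1' h2' h3'
  rw [hweno_ftc, hweno_eval_shift p hdeg xi, hweno_eval_shift p hdeg xi] at h4' h5'
  refine ⟨?_, ?_, ?_, ?_, ?_⟩
  · exact mul_right_cancel₀ hs (by linear_combination hweno_clear hs h1')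
  · exact mul_right_cancel₀ hs (by linear_combination hweno_clear hs h2')
  · exact mul_right_cancel₀ hs (by linear_combination hweno_clear hs h3')
  · exact mul_right_cancel₀ hs (by linear_combination hweno_clear hs h4')
  · exact mul_right_cancel₀ hs (by linear_combination hweno_clear hs h5')

lemma hweno_key_rev (Δx : ℝ) (hs : Δx ≠ 0) (xi fm f0 f1 hm h1 : ℝ) (p : ℝ[X])
    (hdeg : p.natDegree ≤ 4)
    (hE : ((taylor xi p).coeff 0 - (taylor xi p).coeff 1*Δx + (13/12)*(taylor xi p).coeff 2*Δx^2
        - (5/4)*(taylor xi p).coeff 3*Δx^3 + (121/80)*(taylor xi p).coeff 4*Δx^4 = fm) ∧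
      ((taylor xi p).coeff 0 + (taylor xi p).coeff 2*Δx^2/12 + (taylor xi p).coeff 4*Δx^4/80 = f0) ∧
      ((taylor xi p).coeff 0 + (taylor xi p).coeff 1*Δx + (13/12)*(taylor xi p).coeff 2*Δx^2
        + (5/4)*(taylor xi p).coeff 3*Δx^3 + (121/80)*(taylor xi p).coeff 4*Δx^4 = f1) ∧
      ((taylor xi p).coeff 1 - 2*(taylor xi p).coeff 2*Δx + (13/4)*(taylor xi p).coeff 3*Δx^2
        - 5*(taylor xi p).coeff 4*Δx^3 = hm) ∧
      ((taylor xi p).coeff 1 + 2*(taylor xi p).coeff 2*Δx + (13/4)*(taylor xi p).coeff 3*Δx^2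
        + 5*(taylor xi p).coeff 4*Δx^3 = h1)) :
    HWENOBigStencilConds Δx xi fm f0 f1 hm h1 p := by
  obtain ⟨E1, E2, E3, E4, E5⟩ := hE
  refine ⟨?_, ?_, ?_, ?_, ?_⟩
  · rw [hweno_int_shift p hdeg xi, one_div, inv_mul_eq_iff_eq_mul₀ hs]
    linear_combination Δx * E1
  · rw [hweno_int_shift p hdeg xi, one_div, inv_mul_eq_iff_eq_mul₀ hs]
    linear_combination Δx * E2
  · rw [hweno_int_shift p hdeg xi, one_div, inv_mul_eq_iff_eq_mul₀ hs]
    linear_combination Δx * E3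
  · rw [hweno_ftc, hweno_eval_shift p hdeg xi, hweno_eval_shift p hdeg xi,
      one_div, inv_mul_eq_iff_eq_mul₀ hs]
    linear_combination Δx * E4
  · rw [hweno_ftc, hweno_eval_shift p hdeg xi, hweno_eval_shift p hdeg xi,
      one_div, inv_mul_eq_iff_eq_mul₀ hs]
    linear_combination Δx * E5

end hwenoKey

set_option maxHeartbeats 1000000 in
/-- There is a unique quartic polynomial whose cell averages over `I_{i−1}, I_i, I_{i+1}`
match `f₋₁, f₀, f₁` and whose derivative's cell averages over `I_{i−1}, I_{i+1}` match
`h₋₁, h₁`; its value and derivative at the half point `x_{i+1/2}` are given by the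
explicit fifth order HWENO formulas. -/
theorem stmt7 (Δx : ℝ) (hΔx : 0 < Δx) (xi : ℝ) (fm f0 f1 hm h1 : ℝ) :
    (∃! p : Polynomial ℝ, p.degree ≤ 4 ∧ HWENOBigStencilConds Δx xi fm f0 f1 hm h1 p) ∧
    (∀ p : Polynomial ℝ, p.degree ≤ 4 → HWENOBigStencilConds Δx xi fm f0 f1 hm h1 p →
      p.eval (xi + Δx / 2) =
        -(23 / 120) * fm + (19 / 30) * f0 + (67 / 120) * f1
          - (3 * Δx / 40) * hm - (7 * Δx / 40) * h1 ∧
      p.derivative.eval (xi + Δx / 2) =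
        (1 / Δx) * ((3 / 8) * fm - 2 * f0 + (13 / 8) * f1)
          + (1 / 8) * hm - (3 / 8) * h1) := by
  classical
  have hs : Δx ≠ 0 := ne_of_gt hΔx
  -- values part
  have hval : ∀ p : Polynomial ℝ, p.degree ≤ 4 → HWENOBigStencilConds Δx xi fm f0 f1 hm h1 p →
      p.eval (xi + Δx / 2) =
        -(23 / 120) * fm + (19 / 30) * f0 + (67 / 120) * f1
          - (3 * Δx / 40) * hm - (7 * Δx / 40) * h1 ∧
      p.derivative.eval (xi + Δx / 2) =
        (1 / Δx) * ((3 / 8) * fm - 2 * f0 + (13 / 8) * f1)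
          + (1 / 8) * hm - (3 / 8) * h1 := by
    intro p hdeg hc
    have hnd : p.natDegree ≤ 4 := Polynomial.natDegree_le_iff_degree_le.mpr (by exact_mod_cast hdeg)
    obtain ⟨E1, E2, E3, E4, E5⟩ := hweno_key Δx hs xi fm f0 f1 hm h1 p hnd hc
    constructor
    · rw [hweno_eval_shift p hnd xi]
      linear_combination (-23/120)*E1 + (19/30)*E2 + (67/120)*E3 - (3*Δx/40)*E4 - (7*Δx/40)*E5
    · have hd : Δx * p.derivative.eval (xi + Δx/2)
          = (3/8)*fm - 2*f0 + (13/8)*f1 + Δx*((1/8)*hm - (3/8)*h1) := by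
        rw [hweno_deriv_eval_shift p hnd xi]
        linear_combination (3/8)*E1 - 2*E2 + (13/8)*E3 + (Δx/8)*E4 - (3*Δx/8)*E5
      have h2 : p.derivative.eval (xi + Δx/2)
          = ((3/8)*fm - 2*f0 + (13/8)*f1 + Δx*((1/8)*hm - (3/8)*h1))/Δx := by
        rw [eq_div_iff hs]
        linear_combination hd
      rw [h2]
      field_simp
      ring
  -- uniqueness helper
  have huniq : ∀ p q : Polynomial ℝ, p.degree ≤ 4 → HWENOBigStencilConds Δx xi fm f0 f1 hm h1 p →
      q.degree ≤ 4 → HWENOBigStencilConds Δx xi fm f0 f1 hm h1 q → p = q := by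
    intro p q hpd hpc hqd hqc
    have hpn : p.natDegree ≤ 4 := Polynomial.natDegree_le_iff_degree_le.mpr (by exact_mod_cast hpd)
    have hqn : q.natDegree ≤ 4 := Polynomial.natDegree_le_iff_degree_le.mpr (by exact_mod_cast hqd)
    obtain ⟨P1, P2, P3, P4, P5⟩ := hweno_key Δx hs xi fm f0 f1 hm h1 p hpn hpc
    obtain ⟨Q1, Q2, Q3, Q4, Q5⟩ := hweno_key Δx hs xi fm f0 f1 hm h1 q hqn hqc
    have hrp : (Polynomial.taylor xi p).natDegree ≤ 4 := by
      rw [Polynomial.natDegree_taylor]; exact hpn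
    have hrq : (Polynomial.taylor xi q).natDegree ≤ 4 := by
      rw [Polynomial.natDegree_taylor]; exact hqn
    have c0 : (Polynomial.taylor xi p).coeff 0 = (Polynomial.taylor xi q).coeff 0 := by
      linear_combination (-47/480)*(P1-Q1) + (287/240)*(P2-Q2) + (-47/480)*(P3-Q3)
        - (9*Δx/320)*(P4-Q4) + (9*Δx/320)*(P5-Q5)
    have c1 : (Polynomial.taylor xi p).coeff 1 = (Polynomial.taylor xi q).coeff 1 :=
      mul_right_cancel₀ hs (by linear_combination (-13/16)*(P1-Q1) + (13/16)*(P3-Q3)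
        - (5*Δx/16)*(P4-Q4) - (5*Δx/16)*(P5-Q5))
    have c2 : (Polynomial.taylor xi p).coeff 2 = (Polynomial.taylor xi q).coeff 2 :=
      mul_right_cancel₀ (pow_ne_zero 2 hs) (by linear_combination (5/4)*(P1-Q1)
        - (5/2)*(P2-Q2) + (5/4)*(P3-Q3) + (3*Δx/8)*(P4-Q4) - (3*Δx/8)*(P5-Q5))
    have c3 : (Polynomial.taylor xi p).coeff 3 = (Polynomial.taylor xi q).coeff 3 :=
      mul_right_cancel₀ (pow_ne_zero 3 hs) (by linear_combination (1/4)*(P1-Q1)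
        - (1/4)*(P3-Q3) + (Δx/4)*(P4-Q4) + (Δx/4)*(P5-Q5))
    have c4 : (Polynomial.taylor xi p).coeff 4 = (Polynomial.taylor xi q).coeff 4 :=
      mul_right_cancel₀ (pow_ne_zero 4 hs) (by linear_combination (-1/2)*(P1-Q1)
        + (P2-Q2) - (1/2)*(P3-Q3) - (Δx/4)*(P4-Q4) + (Δx/4)*(P5-Q5))
    have htay : Polynomial.taylor xi p = Polynomial.taylor xi q := by
      ext n
      match n with
      | 0 => exact c0
      | 1 => exact c1
      | 2 => exact c2
      | 3 => exact c3
      | 4 => exact c4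
      | (n+5) =>
        rw [Polynomial.coeff_eq_zero_of_natDegree_lt (lt_of_le_of_lt hrp (by omega)),
          Polynomial.coeff_eq_zero_of_natDegree_lt (lt_of_le_of_lt hrq (by omega))]
    exact Polynomial.taylor_injective xi htay
  -- existence
  obtain ⟨r₀, hr₀n, hc0, hc1, hc2, hc3, hc4⟩ := hweno_r
    (-(47/480)*fm + (287/240)*f0 - (47/480)*f1 - (9*Δx/320)*hm + (9*Δx/320)*h1)
    ((-(13/16)*fm + (13/16)*f1 - (5*Δx/16)*hm - (5*Δx/16)*h1)/Δx)
    (((5/4)*fm - (5/2)*f0 + (5/4)*f1 + (3*Δx/8)*hm - (3*Δx/8)*h1)/Δx^2)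
    (((1/4)*fm - (1/4)*f1 + (Δx/4)*hm + (Δx/4)*h1)/Δx^3)
    ((-(1/2)*fm + f0 - (1/2)*f1 - (Δx/4)*hm + (Δx/4)*h1)/Δx^4)
  set p₀ : Polynomial ℝ := Polynomial.taylor (-xi) r₀ with hp₀
  have hrt : Polynomial.taylor xi p₀ = r₀ := by
    rw [hp₀, Polynomial.taylor_taylor, add_neg_cancel, Polynomial.taylor_zero]
  have hp₀n : p₀.natDegree ≤ 4 := by
    rw [hp₀, Polynomial.natDegree_taylor]; exact hr₀n
  have hp₀d : p₀.degree ≤ 4 := by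
    exact_mod_cast Polynomial.degree_le_of_natDegree_le hp₀n
  have hp₀c : HWENOBigStencilConds Δx xi fm f0 f1 hm h1 p₀ := by
    apply hweno_key_rev Δx hs xi fm f0 f1 hm h1 p₀ hp₀n
    rw [hrt, hc0, hc1, hc2, hc3, hc4]
    refine ⟨?_, ?_, ?_, ?_, ?_⟩ <;> field_simp <;> ring
  exact ⟨⟨p₀, ⟨hp₀d, hp₀c⟩, fun q hq => huniq q p₀ hq.1 hq.2 hp₀d hp₀c⟩, hval⟩
end

section
/- Fix Δx > 0 and a grid point x_i, with neighboring nodes x_{i±1} = x_i ± Δx. Given real numbers u₋₁, u₀, u₁, v₋₁, v₁, there exists a unique real polynomial q₀ of degree at most 4 with q₀(x_{i+l}) = u_l for l = −1, 0, 1 and q₀'(x_{i+l}) = v_l for l = −1, 1. Moreover q₀'(x_i) = (3/(4Δx))(u₁ − u₋₁) − (1/4)(v₋₁ + v₁). -/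
/-!
Two quartics satisfying the five interpolation conditions differ by a polynomial of degree at
most 4 with double roots at `xi ± Δx` and a root at `xi`, i.e. divisible by a polynomial of
degree 5, so they coincide. The interpolant is written down explicitly in Taylor form about `xi`;
its linear coefficient is the claimed value of `q₀'(xi)`.
-/

open Polynomial

namespace Polynomial

variable {R K : Type*} [CommRing R] [Field K]

theorem X_sub_C_sq_dvd_of_isRoot_of_isRoot_derivative {r : R[X]} {a : R} (hr : r.IsRoot a)
    (hr' : r.derivative.IsRoot a) : (X - C a) ^ 2 ∣ r := by
  rcases eq_or_ne r 0 with rfl | h0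
  · exact dvd_zero _
  · exact (le_rootMultiplicity_iff h0).1 ((one_lt_rootMultiplicity_iff_isRoot h0).2 ⟨hr, hr'⟩)

theorem eq_zero_of_degree_le_four_of_double_roots {r : K[X]} {a b c : K} (hab : a ≠ b)
    (hac : a ≠ c) (hbc : b ≠ c) (hdeg : r.degree ≤ 4) (ha : r.IsRoot a) (hb : r.IsRoot b)
    (hc : r.IsRoot c) (ha' : r.derivative.IsRoot a) (hb' : r.derivative.IsRoot b) : r = 0 := by
  have coprime {s t : K} (hst : s ≠ t) : IsCoprime (X - C s) (X - C t) :=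
    isCoprime_X_sub_C_of_isUnit_sub (sub_ne_zero.2 hst).isUnit
  have hdvd : (X - C a) ^ 2 * (X - C b) ^ 2 * (X - C c) ∣ r :=
    ((coprime hac).pow_left.mul_left (coprime hbc).pow_left).mul_dvd
      ((coprime hab).pow.mul_dvd (X_sub_C_sq_dvd_of_isRoot_of_isRoot_derivative ha ha')
        (X_sub_C_sq_dvd_of_isRoot_of_isRoot_derivative hb hb'))
      (dvd_iff_isRoot.2 hc)
  by_contra hr
  have h5 : ((X - C a) ^ 2 * (X - C b) ^ 2 * (X - C c)).degree = 5 := by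
    simp only [degree_mul, degree_pow, degree_X_sub_C]
    rfl
  have := (h5 ▸ degree_le_of_dvd hdvd hr).trans hdeg
  exact absurd this (by decide)

end Polynomial

noncomputable def hermiteBirkhoffQuartic (h x um u0 u1 vm v1 : ℝ) : ℝ[X] :=
  C u0 + C ((3 * (u1 - um) - (vm + v1) * h) / (4 * h)) * (X - C x)
    + C ((u1 + um - 2 * u0) / h ^ 2 - (v1 - vm) / (4 * h)) * (X - C x) ^ 2
    + C (((vm + v1) * h - (u1 - um)) / (4 * h ^ 3)) * (X - C x) ^ 3
    + C (((v1 - vm) * h / 4 - (u1 + um) / 2 + u0) / h ^ 4) * (X - C x) ^ 4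

section HermiteBirkhoffQuartic

variable (h x um u0 u1 vm v1 : ℝ)

theorem hermiteBirkhoffQuartic_degree_le :
    (hermiteBirkhoffQuartic h x um u0 u1 vm v1).degree ≤ 4 := by
  unfold hermiteBirkhoffQuartic
  compute_degree

variable {h}

theorem hermiteBirkhoffQuartic_interpolates (hh : h ≠ 0) :
    (hermiteBirkhoffQuartic h x um u0 u1 vm v1).eval (x - h) = um ∧
    (hermiteBirkhoffQuartic h x um u0 u1 vm v1).eval x = u0 ∧
    (hermiteBirkhoffQuartic h x um u0 u1 vm v1).eval (x + h) = u1 ∧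
    (hermiteBirkhoffQuartic h x um u0 u1 vm v1).derivative.eval (x - h) = vm ∧
    (hermiteBirkhoffQuartic h x um u0 u1 vm v1).derivative.eval (x + h) = v1 ∧
    (hermiteBirkhoffQuartic h x um u0 u1 vm v1).derivative.eval x
      = (3 / (4 * h)) * (u1 - um) - (1 / 4) * (vm + v1) := by
  refine ⟨?_, ?_, ?_, ?_, ?_, ?_⟩ <;>
  · simp only [hermiteBirkhoffQuartic, derivative_add, derivative_mul, derivative_pow,
      derivative_C, derivative_X, derivative_sub, eval_add, eval_mul, eval_pow, eval_sub,
      eval_C, eval_X, eval_one, eval_zero]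
    field_simp
    ring

end HermiteBirkhoffQuartic

theorem eq_of_hermiteBirkhoff_conditions {h x : ℝ} (hh : h ≠ 0) {p q : ℝ[X]}
    (hp : p.degree ≤ 4) (hq : q.degree ≤ 4)
    (hm : p.eval (x - h) = q.eval (x - h)) (h0 : p.eval x = q.eval x)
    (h1 : p.eval (x + h) = q.eval (x + h))
    (hm' : p.derivative.eval (x - h) = q.derivative.eval (x - h))
    (h1' : p.derivative.eval (x + h) = q.derivative.eval (x + h)) : p = q := by
  refine sub_eq_zero.1 <| eq_zero_of_degree_le_four_of_double_roots (a := x - h) (b := x + h)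
    (c := x) (by contrapose! hh; linarith) (by simpa using hh) (by simpa using hh)
    ((degree_sub_le p q).trans (max_le hp hq)) ?_ ?_ ?_ ?_ ?_ <;>
  simp [IsRoot, derivative_sub, *]

/-- Hermite-Birkhoff interpolation for the HWENO derivative modification: there is a
unique quartic polynomial `q₀` matching values `u₋₁, u₀, u₁` at `x_{i−1}, x_i, x_{i+1}`
and derivatives `v₋₁, v₁` at `x_{i−1}, x_{i+1}`, and its derivative at `x_i` equals
`(3/(4Δx))(u₁ − u₋₁) − (1/4)(v₋₁ + v₁)`. -/
theorem stmt9 (Δx : ℝ) (hΔx : 0 < Δx) (xi : ℝ) (um u0 u1 vm v1 : ℝ) :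
    (∃! q : Polynomial ℝ, q.degree ≤ 4 ∧
      q.eval (xi - Δx) = um ∧ q.eval xi = u0 ∧ q.eval (xi + Δx) = u1 ∧
      q.derivative.eval (xi - Δx) = vm ∧ q.derivative.eval (xi + Δx) = v1) ∧
    (∀ q : Polynomial ℝ, q.degree ≤ 4 →
      q.eval (xi - Δx) = um → q.eval xi = u0 → q.eval (xi + Δx) = u1 →
      q.derivative.eval (xi - Δx) = vm → q.derivative.eval (xi + Δx) = v1 →
      q.derivative.eval xi = (3 / (4 * Δx)) * (u1 - um) - (1 / 4) * (vm + v1)) := by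
  have hΔx₀ : Δx ≠ 0 := hΔx.ne'
  set q₀ := hermiteBirkhoffQuartic Δx xi um u0 u1 vm v1
  have hdeg := hermiteBirkhoffQuartic_degree_le Δx xi um u0 u1 vm v1
  obtain ⟨hm, h0, h1, hm', h1', hc'⟩ :=
    hermiteBirkhoffQuartic_interpolates xi um u0 u1 vm v1 hΔx₀
  have unique (q : ℝ[X]) (hq : q.degree ≤ 4) (qm : q.eval (xi - Δx) = um)
      (q0 : q.eval xi = u0) (q1 : q.eval (xi + Δx) = u1) (qm' : q.derivative.eval (xi - Δx) = vm)
      (q1' : q.derivative.eval (xi + Δx) = v1) : q = q₀ :=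
    eq_of_hermiteBirkhoff_conditions hΔx₀ hq hdeg (qm.trans hm.symm) (q0.trans h0.symm)
      (q1.trans h1.symm) (qm'.trans hm'.symm) (q1'.trans h1'.symm)
  refine ⟨⟨q₀, ⟨hdeg, hm, h0, h1, hm', h1'⟩, fun q ⟨hq, qm, q0, q1, qm', q1'⟩ ↦
    unique q hq qm q0 q1 qm' q1'⟩, fun q hq qm q0 q1 qm' q1' ↦ ?_⟩
  rw [unique q hq qm q0 q1 qm' q1']
  exact hc'
end

section
/- For every real polynomial u of degree at most 5, every real x, and every Δx > 0, setting v = u', the fifth order linear upwind HWENO stencil reproduces the first derivative exactly: (1/Δx)[ (23/120)u(x−2Δx) − (33/40)u(x−Δx) + (3/40)u(x) + (67/120)u(x+Δx) + (3Δx/40)v(x−2Δx) − (3Δx/40)v(x−Δx) + (7Δx/40)v(x) − (7Δx/40)v(x+Δx) ] = u'(x). -/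
/-- The fifth order linear upwind HWENO stencil for `u_x` is exact on polynomials of
degree at most 5 (with `v = u'`). -/
theorem stmt11 (u : Polynomial ℝ) (hdeg : u.degree ≤ 5) (x Δx : ℝ) (hΔx : 0 < Δx) :
    (1 / Δx) * ((23 / 120) * u.eval (x - 2 * Δx) - (33 / 40) * u.eval (x - Δx)
        + (3 / 40) * u.eval x + (67 / 120) * u.eval (x + Δx)
        + (3 * Δx / 40) * u.derivative.eval (x - 2 * Δx)
        - (3 * Δx / 40) * u.derivative.eval (x - Δx)
        + (7 * Δx / 40) * u.derivative.eval x
        - (7 * Δx / 40) * u.derivative.eval (x + Δx)) = u.derivative.eval x := by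
  have h5 : u.natDegree ≤ 5 := Polynomial.natDegree_le_of_degree_le (by exact_mod_cast hdeg)
  have hnd : u.natDegree < 6 := by omega
  have hnd' : u.derivative.natDegree < 6 := by
    have h1 := u.natDegree_derivative_le
    omega
  have hu : ∀ y : ℝ, u.eval y = ∑ i ∈ Finset.range 6, u.coeff i * y ^ i := fun y =>
    Polynomial.eval_eq_sum_range' hnd y
  have hd : ∀ y : ℝ, u.derivative.eval y
      = ∑ i ∈ Finset.range 6, (u.coeff (i + 1) * (i + 1 : ℝ)) * y ^ i := by
    intro y
    rw [Polynomial.eval_eq_sum_range' hnd' y]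
    refine Finset.sum_congr rfl fun i _ => ?_
    rw [Polynomial.coeff_derivative]
  simp only [hu, hd, Finset.sum_range_succ, Finset.sum_range_zero]
  have hc6 : u.coeff 6 = 0 := Polynomial.coeff_eq_zero_of_natDegree_lt hnd
  have hΔ : Δx ≠ 0 := ne_of_gt hΔx
  simp only [hc6]
  field_simp
  ring
end

section
/- For every real polynomial u of degree at most 5, every real x, and every Δx > 0, setting v = u', the linear upwind HWENO stencil for the derivative equation reproduces the second derivative exactly: (1/Δx)[ −(3/(8Δx))u(x−2Δx) + (19/(8Δx))u(x−Δx) − (29/(8Δx))u(x) + (13/(8Δx))u(x+Δx) − (1/8)v(x−2Δx) + (1/8)v(x−Δx) + (3/8)v(x) − (3/8)v(x+Δx) ] = u''(x). -/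
/-- The fifth order linear upwind HWENO stencil for the derivative equation is exact
for the second derivative on polynomials of degree at most 5 (with `v = u'`). -/
theorem stmt12 (u : Polynomial ℝ) (hdeg : u.degree ≤ 5) (x Δx : ℝ) (hΔx : 0 < Δx) :
    (1 / Δx) * (-(3 / (8 * Δx)) * u.eval (x - 2 * Δx)
        + (19 / (8 * Δx)) * u.eval (x - Δx)
        - (29 / (8 * Δx)) * u.eval x
        + (13 / (8 * Δx)) * u.eval (x + Δx)
        - (1 / 8) * u.derivative.eval (x - 2 * Δx)
        + (1 / 8) * u.derivative.eval (x - Δx)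
        + (3 / 8) * u.derivative.eval x
        - (3 / 8) * u.derivative.eval (x + Δx)) =
      (u.derivative.derivative).eval x := by
  have hnat : u.natDegree ≤ 5 := Polynomial.natDegree_le_iff_degree_le.mpr hdeg
  have h1 : u.derivative.natDegree < 6 :=
    lt_of_le_of_lt (le_trans (Polynomial.natDegree_derivative_le u)
      (Nat.sub_le_sub_right hnat 1)) (by norm_num)
  have h2 : u.derivative.derivative.natDegree < 6 :=
    lt_of_le_of_lt (le_trans (Polynomial.natDegree_derivative_le _)
      (Nat.sub_le _ _)) h1
  have hu : ∀ y : ℝ, u.eval y = ∑ i ∈ Finset.range 6, u.coeff i * y ^ i :=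
    fun y => Polynomial.eval_eq_sum_range' (lt_of_le_of_lt hnat (by norm_num)) y
  have hd : ∀ y : ℝ, u.derivative.eval y =
      ∑ i ∈ Finset.range 6, u.derivative.coeff i * y ^ i :=
    fun y => Polynomial.eval_eq_sum_range' h1 y
  have hdd : u.derivative.derivative.eval x =
      ∑ i ∈ Finset.range 6, u.derivative.derivative.coeff i * x ^ i :=
    Polynomial.eval_eq_sum_range' h2 x
  simp only [hu, hd, hdd, Finset.sum_range_succ, Finset.sum_range_zero,
    Polynomial.coeff_derivative]
  have hc6 : u.coeff 6 = 0 := Polynomial.coeff_eq_zero_of_natDegree_lt (lt_of_le_of_lt hnat (by norm_num))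
  have hc7 : u.coeff 7 = 0 := Polynomial.coeff_eq_zero_of_natDegree_lt (lt_of_le_of_lt hnat (by norm_num))
  push_cast [hc6, hc7]
  field_simp
  ring
end
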